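/- arXiv:2510.15326 — 4 statements merged into one kernel-verified Lean document; each statement's English description precedes it below -/
import Mathlib

section
/- Let Ω ⊆ ℂ be open, let u : Ω → ℝ and α, β : Ω → ℂ be smooth, and suppose that on Ω: e^{2u} = |α|² + |β|²; α_z̄ = 0 (α is holomorphic); and (1/2)·ᾱ·α_z + β̄·β_z − u_z·e^{2u} = 0. Then β·(β̄)_z̄ = β̄·β_z̄ holds everywhere on Ω. -/
open Complex ComplexConjugate

/-- Wirtinger derivative `g_z = (∂ₓg - i ∂_y g)/2`. -/
noncomputable def wderivZ (g : ℂ → ℂ) (w : ℂ) : ℂ :=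
  (fderiv ℝ g w 1 - Complex.I * fderiv ℝ g w Complex.I) / 2

/-- Wirtinger derivative `g_z̄ = (∂ₓg + i ∂_y g)/2`. -/
noncomputable def wderivZbar (g : ℂ → ℂ) (w : ℂ) : ℂ :=
  (fderiv ℝ g w 1 + Complex.I * fderiv ℝ g w Complex.I) / 2

/-!
Apply `∂_z̄` to `e^{2u} = α ᾱ + β β̄`. Since `α_z̄ = 0`, `(ḡ)_z̄ = conj (g_z)` and `u` is real,
the result is `2 u_z̄ e^{2u} = α conj (α_z) + β̄ β_z̄ + β (β̄)_z̄`, while twice the conjugate of the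
third equation reads `2 u_z̄ e^{2u} = α conj (α_z) + 2 β (β̄)_z̄`. Subtracting gives the claim.
-/

section Wirtinger

variable {f g : ℂ → ℂ} {w : ℂ}

lemma Filter.EventuallyEq.wderivZbar_eq (h : f =ᶠ[nhds w] g) :
    wderivZbar f w = wderivZbar g w := by
  simp only [wderivZbar, h.fderiv_eq]

lemma wderivZbar_add (hf : DifferentiableAt ℝ f w) (hg : DifferentiableAt ℝ g w) :
    wderivZbar (fun z => f z + g z) w = wderivZbar f w + wderivZbar g w := by
  simp only [wderivZbar, fderiv_fun_add hf hg, add_apply]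
  ring

lemma wderivZbar_mul (hf : DifferentiableAt ℝ f w) (hg : DifferentiableAt ℝ g w) :
    wderivZbar (fun z => f z * g z) w = wderivZbar f w * g w + f w * wderivZbar g w := by
  simp only [wderivZbar, fderiv_fun_mul hf hg, add_apply, smul_apply, smul_eq_mul]
  ring

lemma wderivZbar_conj (g : ℂ → ℂ) (w : ℂ) :
    wderivZbar (fun z => conj (g z)) w = conj (wderivZ g w) := by
  have h := conjCLE.comp_fderiv (f := g) (x := w) (𝕜 := ℝ)
  simp only [wderivZbar, wderivZ, Function.comp_def, conjCLE_apply] at h ⊢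
  simp [h, map_div₀, map_ofNat]

lemma wderivZbar_ofReal (u : ℂ → ℝ) (w : ℂ) :
    wderivZbar (fun z => (u z : ℂ)) w = conj (wderivZ (fun z => (u z : ℂ)) w) := by
  simpa only [conj_ofReal] using wderivZbar_conj (fun z => (u z : ℂ)) w

lemma HasDerivAt.wderivZbar_comp {h : ℂ → ℂ} {h' : ℂ} (hh : HasDerivAt h h' (f w))
    (hf : DifferentiableAt ℝ f w) :
    wderivZbar (fun z => h (f z)) w = h' * wderivZbar f w := by
  have := (hh.comp_hasFDerivAt (𝕜 := ℝ) w hf.hasFDerivAt).fderiv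
  simp only [wderivZbar, Function.comp_def] at this ⊢
  simp only [this, smul_apply, smul_eq_mul]
  ring

end Wirtinger

lemma wderivZbar_ofReal_exp_two_mul {u : ℂ → ℝ} {w : ℂ} (hu : DifferentiableAt ℝ u w) :
    wderivZbar (fun z => (Real.exp (2 * u z) : ℂ)) w
      = 2 * Real.exp (2 * u w) * wderivZbar (fun z => (u z : ℂ)) w := by
  have hexp : HasDerivAt (fun s => cexp (2 * s)) (cexp (2 * u w) * 2) (u w) := by
    simpa using ((hasDerivAt_id (u w : ℂ)).const_mul 2).cexp
  have hu' : DifferentiableAt ℝ (fun z => (u z : ℂ)) w := ofRealCLM.differentiableAt.comp w hu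
  simp only [ofReal_exp, ofReal_mul, ofReal_ofNat]
  rw [hexp.wderivZbar_comp hu']
  ring

theorem stmt0 (Ω : Set ℂ) (hΩ : IsOpen Ω)
    (u : ℂ → ℝ) (α β : ℂ → ℂ)
    (hu : ContDiffOn ℝ (⊤ : ℕ∞) u Ω)
    (hα : ContDiffOn ℝ (⊤ : ℕ∞) α Ω)
    (hβ : ContDiffOn ℝ (⊤ : ℕ∞) β Ω)
    (h1 : ∀ w ∈ Ω, Real.exp (2 * u w) = ‖α w‖ ^ 2 + ‖β w‖ ^ 2)
    (h2 : ∀ w ∈ Ω, wderivZbar α w = 0)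
    (h3 : ∀ w ∈ Ω,
      (1 / 2 : ℂ) * conj (α w) * wderivZ α w + conj (β w) * wderivZ β w
        - wderivZ (fun z => (u z : ℂ)) w * (Real.exp (2 * u w) : ℂ) = 0) :
    ∀ w ∈ Ω, β w * wderivZbar (fun z => conj (β z)) w = conj (β w) * wderivZbar β w := by
  intro w hw
  have hmem : Ω ∈ nhds w := hΩ.mem_nhds hw
  have hud : DifferentiableAt ℝ u w := (hu.contDiffAt hmem).differentiableAt (by simp)
  have hαd : DifferentiableAt ℝ α w := (hα.contDiffAt hmem).differentiableAt (by simp)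
  have hβd : DifferentiableAt ℝ β w := (hβ.contDiffAt hmem).differentiableAt (by simp)
  have hE : (fun z => (Real.exp (2 * u z) : ℂ)) =ᶠ[nhds w]
      fun z => α z * conj (α z) + β z * conj (β z) := by
    filter_upwards [hmem] with z hz
    simp only [h1 z hz, mul_conj, ofReal_add, normSq_eq_norm_sq, ofReal_pow]
  have hα_conj : DifferentiableAt ℝ (fun z => conj (α z)) w := hαd.star
  have hβ_conj : DifferentiableAt ℝ (fun z => conj (β z)) w := hβd.star
  have hdiff := hE.wderivZbar_eq
  rw [wderivZbar_ofReal_exp_two_mul hud,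
    wderivZbar_add (hαd.fun_mul hα_conj) (hβd.fun_mul hβ_conj), wderivZbar_mul hαd hα_conj,
    wderivZbar_mul hβd hβ_conj, h2 w hw, wderivZbar_conj, wderivZbar_conj, wderivZbar_ofReal] at hdiff
  have h3_conj := congrArg conj (h3 w hw)
  simp only [map_sub, map_add, map_mul, map_div₀, map_one, map_ofNat, map_zero, conj_conj,
    conj_ofReal] at h3_conj
  rw [wderivZbar_conj]
  linear_combination hdiff + 2 * h3_conj
end

section
/- Let Ω ⊆ ℂ be open, let û : Ω → ℝ be smooth, let α : Ω → ℂ be holomorphic, and let λ ∈ ℂ with |λ| = 1. Define the smooth 2×2-matrix-valued functions on Ω: U := [[û_z/4, −(√2/2)λ⁻¹e^{û/2}], [(√2/2)λ⁻¹αe^{−û/2}, −û_z/4]] and V := [[−û_z̄/4, −(√2/2)λ·ᾱ·e^{−û/2}], [(√2/2)λe^{û/2}, û_z̄/4]]. Let F : Ω → GL(2, ℂ) be smooth with F_z = F·U and F_z̄ = F·V on Ω, and set φ := F·σ₃·F⁻¹ where σ₃ = diag(1, −1). Then φ_{zz̄} = −(e^û + |α|² e^{−û})·φ holds on Ω. 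-/
open Complex ComplexConjugate Matrix

/-- Entrywise Wirtinger derivative `g_z` on matrix-valued maps. -/
noncomputable def mderivZ (g : ℂ → Matrix (Fin 2) (Fin 2) ℂ) (w : ℂ) :
    Matrix (Fin 2) (Fin 2) ℂ :=
  Matrix.of fun i j => wderivZ (fun z => g z i j) w

/-- Entrywise Wirtinger derivative `g_z̄` on matrix-valued maps. -/
noncomputable def mderivZbar (g : ℂ → Matrix (Fin 2) (Fin 2) ℂ) (w : ℂ) :
    Matrix (Fin 2) (Fin 2) ℂ :=
  Matrix.of fun i j => wderivZbar (fun z => g z i j) w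

/-- The Pauli matrix `σ₃ = diag(1, −1)`. -/
def sigma3 : Matrix (Fin 2) (Fin 2) ℂ := !![1, 0; 0, -1]

/-- The coefficient `U` of the Maurer–Cartan form. -/
noncomputable def Umat (uh : ℂ → ℝ) (α : ℂ → ℂ) (lam : ℂ) (w : ℂ) :
    Matrix (Fin 2) (Fin 2) ℂ :=
  !![wderivZ (fun z => (uh z : ℂ)) w / 4,
      -((Real.sqrt 2 : ℂ) / 2) * lam⁻¹ * (Real.exp (uh w / 2) : ℂ);
     ((Real.sqrt 2 : ℂ) / 2) * lam⁻¹ * α w * (Real.exp (-(uh w) / 2) : ℂ),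
      -(wderivZ (fun z => (uh z : ℂ)) w) / 4]

/-- The coefficient `V` of the Maurer–Cartan form. -/
noncomputable def Vmat (uh : ℂ → ℝ) (α : ℂ → ℂ) (lam : ℂ) (w : ℂ) :
    Matrix (Fin 2) (Fin 2) ℂ :=
  !![-(wderivZbar (fun z => (uh z : ℂ)) w) / 4,
      -((Real.sqrt 2 : ℂ) / 2) * lam * conj (α w) * (Real.exp (-(uh w) / 2) : ℂ);
     ((Real.sqrt 2 : ℂ) / 2) * lam * (Real.exp (uh w / 2) : ℂ),
      wderivZbar (fun z => (uh z : ℂ)) w / 4]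


/-!
Since `F_z = F U`, the `z`-derivative of a conjugate `F X F⁻¹` is `F (X_z + [U, X]) F⁻¹`, and
likewise for `∂_z̄` with `V`. Hence `φ_z = F [U, σ₃] F⁻¹` and
`φ_{zz̄} = F ([U, σ₃]_z̄ + [V, [U, σ₃]]) F⁻¹`. The commutator `[U, σ₃]` is off-diagonal with
entries `√2 λ⁻¹ e^{û/2}` and `√2 λ⁻¹ α e^{−û/2}`; since `α_z̄ = 0`, its `z̄`-derivative is
`(û_z̄ / 2) σ₃ [U, σ₃]`, these `û_z̄` terms cancel against the diagonal of `V`, and what is left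
is `−(e^û + |α|² e^{−û}) σ₃`.
-/

open Filter Topology

/-- `wderivZ = wderivComb (-I)` and `wderivZbar = wderivComb I`, so the calculus rules are
proved once, for every coefficient `c`. -/
noncomputable def wderivComb (c : ℂ) (g : ℂ → ℂ) (w : ℂ) : ℂ :=
  (fderiv ℝ g w 1 + c * fderiv ℝ g w I) / 2

section Scalar

variable {c w : ℂ} {f g : ℂ → ℂ}

lemma wderivZ_eq_wderivComb : wderivZ g w = wderivComb (-I) g w := by
  simp only [wderivZ, wderivComb]; ring

lemma wderivZbar_eq_wderivComb : wderivZbar g w = wderivComb I g w := rfl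

lemma Filter.EventuallyEq.wderivComb_eq (h : f =ᶠ[𝓝 w] g) :
    wderivComb c f w = wderivComb c g w := by
  simp only [wderivComb, h.fderiv_eq]

lemma wderivComb_const (c a w : ℂ) : wderivComb c (fun _ => a) w = 0 := by
  simp [wderivComb]

lemma wderivComb_add (hf : DifferentiableAt ℝ f w) (hg : DifferentiableAt ℝ g w) :
    wderivComb c (fun z => f z + g z) w = wderivComb c f w + wderivComb c g w := by
  simp only [wderivComb, fderiv_fun_add hf hg, _root_.add_apply]; ring

lemma wderivComb_mul (hf : DifferentiableAt ℝ f w) (hg : DifferentiableAt ℝ g w) :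
    wderivComb c (fun z => f z * g z) w = f w * wderivComb c g w + g w * wderivComb c f w := by
  simp only [wderivComb, fderiv_fun_mul hf hg, _root_.add_apply,
    _root_.smul_apply, smul_eq_mul]
  ring

lemma wderivComb_const_mul (a : ℂ) (hf : DifferentiableAt ℝ f w) :
    wderivComb c (fun z => a * f z) w = a * wderivComb c f w := by
  rw [wderivComb_mul (differentiableAt_const a) hf, wderivComb_const, mul_zero, add_zero]

lemma wderivComb_comp {φ : ℂ → ℂ} (hφ : DifferentiableAt ℂ φ (f w))
    (hf : DifferentiableAt ℝ f w) :
    wderivComb c (φ ∘ f) w = deriv φ (f w) * wderivComb c f w := by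
  have hcomp := (hφ.hasDerivAt.hasFDerivAt.restrictScalars ℝ).comp w hf.hasFDerivAt
  simp only [wderivComb, hcomp.fderiv, ContinuousLinearMap.comp_apply,
    ContinuousLinearMap.coe_restrictScalars', ContinuousLinearMap.toSpanSingleton_apply,
    smul_eq_mul]
  ring

lemma wderivComb_I_id (w : ℂ) : wderivComb I id w = 0 := by
  simp [wderivComb]

lemma wderivComb_I_eq_zero_of_differentiableAt (hf : DifferentiableAt ℂ f w) :
    wderivComb I f w = 0 := by
  simpa [wderivComb_I_id] using
    wderivComb_comp (c := I) (f := id) (φ := f) hf differentiableAt_id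

lemma wderivComb_ofReal_exp {h : ℂ → ℝ} (hh : DifferentiableAt ℝ h w) :
    wderivComb c (fun z => (Real.exp (h z) : ℂ)) w
      = Real.exp (h w) * wderivComb c (fun z => (h z : ℂ)) w := by
  have hcast : DifferentiableAt ℝ (fun z => (h z : ℂ)) w := ofRealCLM.differentiableAt.comp w hh
  have hexp : (fun z => (Real.exp (h z) : ℂ)) = Complex.exp ∘ fun z => (h z : ℂ) := by
    funext z; simp [Complex.ofReal_exp]
  rw [hexp, wderivComb_comp differentiableAt_exp hcast, Complex.deriv_exp, Complex.ofReal_exp]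

end Scalar

noncomputable def mderivComb (c : ℂ) (g : ℂ → Matrix (Fin 2) (Fin 2) ℂ) (w : ℂ) :
    Matrix (Fin 2) (Fin 2) ℂ :=
  Matrix.of fun i j => wderivComb c (fun z => g z i j) w

def MatrixDifferentiableAt (g : ℂ → Matrix (Fin 2) (Fin 2) ℂ) (w : ℂ) : Prop :=
  ∀ i j, DifferentiableAt ℝ (fun z => g z i j) w

section Matrix

variable {c w : ℂ} {A B F : ℂ → Matrix (Fin 2) (Fin 2) ℂ}

lemma mderivZ_eq_mderivComb : mderivZ A w = mderivComb (-I) A w := by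
  ext i j; exact wderivZ_eq_wderivComb

lemma mderivZbar_eq_mderivComb : mderivZbar A w = mderivComb I A w := rfl

lemma Filter.EventuallyEq.mderivComb_eq (h : A =ᶠ[𝓝 w] B) :
    mderivComb c A w = mderivComb c B w := by
  ext i j
  exact Filter.EventuallyEq.wderivComb_eq (h.mono fun z hz => by simp only [hz])

lemma mderivComb_const (c : ℂ) (M : Matrix (Fin 2) (Fin 2) ℂ) (w : ℂ) :
    mderivComb c (fun _ => M) w = 0 := by
  ext i j; exact wderivComb_const c _ w

lemma matrixDifferentiableAt_const (M : Matrix (Fin 2) (Fin 2) ℂ) :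
    MatrixDifferentiableAt (fun _ => M) w :=
  fun _ _ => differentiableAt_const _

lemma MatrixDifferentiableAt.mul (hA : MatrixDifferentiableAt A w)
    (hB : MatrixDifferentiableAt B w) : MatrixDifferentiableAt (fun z => A z * B z) w := by
  intro i j
  simp only [Matrix.mul_apply, Fin.sum_univ_two]
  exact ((hA i 0).mul (hB 0 j)).add ((hA i 1).mul (hB 1 j))

lemma MatrixDifferentiableAt.inv (hA : MatrixDifferentiableAt A w) (hdet : (A w).det ≠ 0) :
    MatrixDifferentiableAt (fun z => (A z)⁻¹) w := by
  have hdet_diff : DifferentiableAt ℝ (fun z => (A z).det) w := by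
    simp only [Matrix.det_fin_two]
    exact ((hA 0 0).mul (hA 1 1)).sub ((hA 0 1).mul (hA 1 0))
  intro i j
  simp only [Matrix.inv_def, Matrix.adjugate_fin_two, Ring.inverse_eq_inv', Matrix.smul_apply,
    smul_eq_mul]
  refine (hdet_diff.inv hdet).mul ?_
  fin_cases i <;> fin_cases j <;> simp [hA 0 0, hA 0 1, hA 1 0, hA 1 1]

lemma mderivComb_mul (hA : MatrixDifferentiableAt A w) (hB : MatrixDifferentiableAt B w) :
    mderivComb c (fun z => A z * B z) w = mderivComb c A w * B w + A w * mderivComb c B w := by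
  ext i j
  simp only [mderivComb, Matrix.of_apply, Matrix.add_apply, Matrix.mul_apply, Fin.sum_univ_two]
  rw [wderivComb_add ((hA i 0).fun_mul (hB 0 j)) ((hA i 1).fun_mul (hB 1 j)),
    wderivComb_mul (hA i 0) (hB 0 j), wderivComb_mul (hA i 1) (hB 1 j)]
  ring

lemma mderivComb_inv (hF : MatrixDifferentiableAt F w) (hunit : ∀ᶠ z in 𝓝 w, IsUnit (F z)) :
    mderivComb c (fun z => (F z)⁻¹) w = -((F w)⁻¹ * mderivComb c F w * (F w)⁻¹) := by
  have hdet : IsUnit (F w).det := (Matrix.isUnit_iff_isUnit_det _).mp hunit.self_of_nhds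
  have hFinv := hF.inv hdet.ne_zero
  have hprod : mderivComb c F w * (F w)⁻¹ + F w * mderivComb c (fun z => (F z)⁻¹) w = 0 := by
    rw [← mderivComb_mul hF hFinv, ← mderivComb_const c 1 w]
    exact Filter.EventuallyEq.mderivComb_eq
      (hunit.mono fun z hz => Matrix.mul_nonsing_inv _ ((Matrix.isUnit_iff_isUnit_det _).mp hz))
  calc mderivComb c (fun z => (F z)⁻¹) w
      = (F w)⁻¹ * (F w * mderivComb c (fun z => (F z)⁻¹) w) := by
        rw [← Matrix.mul_assoc, Matrix.nonsing_inv_mul _ hdet, Matrix.one_mul]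
    _ = -((F w)⁻¹ * mderivComb c F w * (F w)⁻¹) := by
        rw [eq_neg_of_add_eq_zero_right hprod, Matrix.mul_neg, Matrix.mul_assoc]

lemma mderivComb_conj {X : ℂ → Matrix (Fin 2) (Fin 2) ℂ} {M : Matrix (Fin 2) (Fin 2) ℂ}
    (hF : MatrixDifferentiableAt F w) (hX : MatrixDifferentiableAt X w)
    (hunit : ∀ᶠ z in 𝓝 w, IsUnit (F z)) (hFM : mderivComb c F w = F w * M) :
    mderivComb c (fun z => F z * X z * (F z)⁻¹) w
      = F w * (mderivComb c X w + (M * X w - X w * M)) * (F w)⁻¹ := by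
  have hdet : IsUnit (F w).det := (Matrix.isUnit_iff_isUnit_det _).mp hunit.self_of_nhds
  have hinv : mderivComb c (fun z => (F z)⁻¹) w = -(M * (F w)⁻¹) := by
    rw [mderivComb_inv hF hunit, hFM, ← Matrix.mul_assoc, Matrix.nonsing_inv_mul _ hdet,
      Matrix.one_mul]
  rw [mderivComb_mul (hF.mul hX) (hF.inv hdet.ne_zero), mderivComb_mul hF hX, hinv, hFM]
  noncomm_ring

end Matrix

lemma smul_sigma3_mul_offDiag_add_commutator (β p q r s : ℂ) :
    (β / 2) • (sigma3 * !![0, r; s, 0]) + (!![-β / 4, p; q, β / 4] * !![0, r; s, 0]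
      - !![0, r; s, 0] * !![-β / 4, p; q, β / 4]) = (p * s - q * r) • sigma3 := by
  ext i j
  fin_cases i <;> fin_cases j <;> simp [sigma3] <;> ring

noncomputable def commUmatSigma3 (uh : ℂ → ℝ) (α : ℂ → ℂ) (lam : ℂ) (w : ℂ) :
    Matrix (Fin 2) (Fin 2) ℂ :=
  !![0, (Real.sqrt 2 : ℂ) * lam⁻¹ * (Real.exp (uh w / 2) : ℂ);
     (Real.sqrt 2 : ℂ) * lam⁻¹ * α w * (Real.exp (-(uh w) / 2) : ℂ), 0]

section Frame

variable {uh : ℂ → ℝ} {α : ℂ → ℂ} {lam w : ℂ}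

lemma Umat_mul_sigma3_sub_sigma3_mul_Umat :
    Umat uh α lam w * sigma3 - sigma3 * Umat uh α lam w = commUmatSigma3 uh α lam w := by
  ext i j
  fin_cases i <;> fin_cases j <;> simp [Umat, sigma3, commUmatSigma3] <;> ring

lemma wderivComb_ofReal_exp_mul_div_two {c : ℂ} (s : ℝ) (huh : DifferentiableAt ℝ uh w) :
    wderivComb c (fun z => (Real.exp (s * uh z / 2) : ℂ)) w
      = s / 2 * Real.exp (s * uh w / 2) * wderivComb c (fun z => (uh z : ℂ)) w := by
  have hlin : (fun z => ((s * uh z / 2 : ℝ) : ℂ)) = fun z => (s / 2 : ℂ) * uh z := by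
    funext z; push_cast; ring
  rw [wderivComb_ofReal_exp (by fun_prop), hlin,
    wderivComb_const_mul (f := fun z => (uh z : ℂ)) _ (by fun_prop)]
  ring

lemma matrixDifferentiableAt_commUmatSigma3 (huh : DifferentiableAt ℝ uh w)
    (hα : DifferentiableAt ℝ α w) : MatrixDifferentiableAt (commUmatSigma3 uh α lam) w := by
  intro i j
  fin_cases i <;> fin_cases j <;> simp [commUmatSigma3, -Complex.ofReal_exp] <;> fun_prop

lemma mderivComb_I_commUmatSigma3 (huh : DifferentiableAt ℝ uh w) (hα : DifferentiableAt ℂ α w) :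
    mderivComb I (commUmatSigma3 uh α lam) w
      = (wderivZbar (fun z => (uh z : ℂ)) w / 2) • (sigma3 * commUmatSigma3 uh α lam w) := by
  have hplus := wderivComb_ofReal_exp_mul_div_two (c := I) 1 huh
  have hminus := wderivComb_ofReal_exp_mul_div_two (c := I) (-1) huh
  simp only [one_mul, neg_mul] at hplus hminus
  have hα' : DifferentiableAt ℝ α w := hα.restrictScalars ℝ
  ext i j
  fin_cases i <;> fin_cases j <;>
    simp [mderivComb, commUmatSigma3, sigma3, wderivComb_const, -Complex.ofReal_exp]
  · rw [wderivComb_const_mul _ (by fun_prop), hplus, ← wderivZbar_eq_wderivComb]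
    push_cast; ring
  · rw [wderivComb_mul (by fun_prop) (by fun_prop), wderivComb_const_mul _ hα',
      wderivComb_I_eq_zero_of_differentiableAt hα, hminus, ← wderivZbar_eq_wderivComb]
    push_cast; ring

lemma mderivComb_I_commUmatSigma3_add_commutator (huh : DifferentiableAt ℝ uh w)
    (hα : DifferentiableAt ℂ α w) (hlam : lam ≠ 0) :
    mderivComb I (commUmatSigma3 uh α lam) w
        + (Vmat uh α lam w * commUmatSigma3 uh α lam w
          - commUmatSigma3 uh α lam w * Vmat uh α lam w)
      = -(((Real.exp (uh w) + ‖α w‖ ^ 2 * Real.exp (-(uh w)) : ℝ)) : ℂ) • sigma3 := by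
  have hsqrt : (Real.sqrt 2 : ℂ) * Real.sqrt 2 = 2 := by
    rw [← ofReal_mul, Real.mul_self_sqrt zero_le_two, ofReal_ofNat]
  have hexp (a : ℝ) : (Real.exp (a / 2) : ℂ) * Real.exp (a / 2) = Real.exp a := by
    rw [← ofReal_mul, ← Real.exp_add, add_halves]
  rw [mderivComb_I_commUmatSigma3 huh hα, Vmat, commUmatSigma3,
    smul_sigma3_mul_offDiag_add_commutator]
  congr 1
  calc _ = -((Real.sqrt 2 : ℂ) * Real.sqrt 2 / 2 * (lam * lam⁻¹))
          * ((conj (α w) * α w) * ((Real.exp (-(uh w) / 2) : ℂ) * Real.exp (-(uh w) / 2))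
            + (Real.exp (uh w / 2) : ℂ) * Real.exp (uh w / 2)) := by ring
    _ = _ := by
      rw [hsqrt, mul_inv_cancel₀ hlam, Complex.conj_mul', hexp, hexp]
      push_cast; ring

end Frame

theorem stmt11 (Ω : Set ℂ) (hΩ : IsOpen Ω)
    (uh : ℂ → ℝ) (α : ℂ → ℂ) (lam : ℂ)
    (huh : ContDiffOn ℝ (⊤ : ℕ∞) uh Ω)
    (hα : DifferentiableOn ℂ α Ω)
    (hlam : ‖lam‖ = 1)
    (F : ℂ → Matrix (Fin 2) (Fin 2) ℂ)
    (hFsmooth : ∀ i j, ContDiffOn ℝ (⊤ : ℕ∞) (fun w => F w i j) Ω)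
    (hFinv : ∀ w ∈ Ω, IsUnit (F w))
    (hFz : ∀ w ∈ Ω, mderivZ F w = F w * Umat uh α lam w)
    (hFzbar : ∀ w ∈ Ω, mderivZbar F w = F w * Vmat uh α lam w) :
    ∀ w ∈ Ω,
      mderivZbar (fun z => mderivZ (fun z' => F z' * sigma3 * (F z')⁻¹) z) w
        = -(((Real.exp (uh w) + ‖α w‖ ^ 2 * Real.exp (-(uh w)) : ℝ)) : ℂ)
            • (F w * sigma3 * (F w)⁻¹) := by
  have hF : ∀ z ∈ Ω, MatrixDifferentiableAt F z := fun z hz i j =>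
    ((hFsmooth i j).contDiffAt (hΩ.mem_nhds hz)).differentiableAt (by simp)
  have hunit : ∀ z ∈ Ω, ∀ᶠ y in 𝓝 z, IsUnit (F y) := fun z hz =>
    eventually_of_mem (hΩ.mem_nhds hz) hFinv
  have hφz : ∀ z ∈ Ω, mderivZ (fun z' => F z' * sigma3 * (F z')⁻¹) z
      = F z * commUmatSigma3 uh α lam z * (F z)⁻¹ := fun z hz => by
    rw [mderivZ_eq_mderivComb, mderivComb_conj (hF z hz) (matrixDifferentiableAt_const sigma3)
      (hunit z hz) (mderivZ_eq_mderivComb.symm.trans (hFz z hz)), mderivComb_const, zero_add,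
      Umat_mul_sigma3_sub_sigma3_mul_Umat]
  intro w hw
  have huhw : DifferentiableAt ℝ uh w :=
    ((huh.contDiffAt (hΩ.mem_nhds hw)).differentiableAt (by simp))
  have hαw : DifferentiableAt ℂ α w := hα.differentiableAt (hΩ.mem_nhds hw)
  have hlam0 : lam ≠ 0 := by rintro rfl; simp at hlam
  rw [mderivZbar_eq_mderivComb, (eventuallyEq_of_mem (hΩ.mem_nhds hw) hφz).mderivComb_eq,
    mderivComb_conj (hF w hw) (matrixDifferentiableAt_commUmatSigma3 huhw (hαw.restrictScalars ℝ))
      (hunit w hw) (hFzbar w hw),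
    mderivComb_I_commUmatSigma3_add_commutator huhw hαw hlam0, Matrix.mul_smul, Matrix.smul_mul]
end

section
/- For all z, λ ∈ ℂ with |λ| = 1, define the 2×2 complex matrices F := (1 + |z|²)^{−1/2}·[[1, zλ⁻¹], [−z̄λ, 1]] and B := (1 + |z|²)^{−1/2}·[[1, 0], [z̄λ, 1 + |z|²]]. Then F is special unitary (F*F = I and det F = 1), det B = 1, and [[1, zλ⁻¹], [0, 1]] = F·B. Moreover, for fixed z the entries of B are polynomials in λ, and at λ = 0 the matrix B equals the diagonal matrix (1 + |z|²)^{−1/2}·diag(1, 1 + |z|²), which has positive real diagonal entries. -/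
open Complex ComplexConjugate Matrix

/-!
For `‖λ‖ = 1` we have `conj (z λ⁻¹) = conj z · λ` and `‖z λ⁻¹‖ = ‖z‖`, so `F` and `B λ` only
depend on `w = z λ⁻¹`: they are the factorization of `[[1, w], [0, 1]]` into a unitary and a
lower triangular matrix obtained by Gram–Schmidt on its columns, last column first. With
`c = (1 + ‖w‖²)^{-1/2}`, every identity reduces to `c² (1 + ‖w‖²) = 1` and `w · conj w = ‖w‖²`.
-/

lemma inv_sqrt_one_add_norm_sq_sq_mul (w : ℂ) :
    ((Real.sqrt (1 + ‖w‖ ^ 2))⁻¹ : ℂ) ^ 2 * (1 + (‖w‖ : ℂ) ^ 2) = 1 := by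
  have hpos : (0 : ℝ) < 1 + ‖w‖ ^ 2 := by positivity
  have hsq : ((Real.sqrt (1 + ‖w‖ ^ 2) : ℝ) : ℂ) ^ 2 = 1 + (‖w‖ : ℂ) ^ 2 := by
    exact_mod_cast Real.sq_sqrt hpos.le
  rw [inv_pow, hsq, inv_mul_cancel₀]
  exact_mod_cast hpos.ne'

noncomputable def iwasawaUnitary (w : ℂ) : Matrix (Fin 2) (Fin 2) ℂ :=
  ((Real.sqrt (1 + ‖w‖ ^ 2))⁻¹ : ℂ) • !![1, w; -conj w, 1]

noncomputable def iwasawaTriangular (w : ℂ) : Matrix (Fin 2) (Fin 2) ℂ :=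
  ((Real.sqrt (1 + ‖w‖ ^ 2))⁻¹ : ℂ) • !![1, 0; conj w, 1 + (‖w‖ : ℂ) ^ 2]

theorem iwasawaUnitary_mem_specialUnitaryGroup (w : ℂ) :
    iwasawaUnitary w ∈ specialUnitaryGroup (Fin 2) ℂ := by
  have hc := inv_sqrt_one_add_norm_sq_sq_mul w
  set c : ℂ := (Real.sqrt (1 + ‖w‖ ^ 2))⁻¹
  refine ⟨mem_unitaryGroup_iff'.2 ?_, ?_⟩
  · ext i j
    fin_cases i <;> fin_cases j <;>
      simp [iwasawaUnitary, star_eq_conjTranspose, mul_apply, Fin.sum_univ_two]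
    · linear_combination hc + c ^ 2 * mul_conj' w
    · ring
    · ring
    · linear_combination hc + c ^ 2 * conj_mul' w
  · simp [iwasawaUnitary, det_fin_two]
    linear_combination hc + c ^ 2 * mul_conj' w

theorem det_iwasawaTriangular (w : ℂ) : (iwasawaTriangular w).det = 1 := by
  simp [iwasawaTriangular, det_fin_two]
  linear_combination inv_sqrt_one_add_norm_sq_sq_mul w

theorem iwasawaUnitary_mul_iwasawaTriangular (w : ℂ) :
    iwasawaUnitary w * iwasawaTriangular w = !![1, w; 0, 1] := by
  have hc := inv_sqrt_one_add_norm_sq_sq_mul w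
  set c : ℂ := (Real.sqrt (1 + ‖w‖ ^ 2))⁻¹
  ext i j
  fin_cases i <;> fin_cases j <;>
    simp [iwasawaUnitary, iwasawaTriangular, mul_apply, Fin.sum_univ_two]
  · linear_combination hc + c ^ 2 * mul_conj' w
  · linear_combination w * hc
  · ring
  · linear_combination hc

theorem stmt13 (z lam : ℂ) (hlam : ‖lam‖ = 1) :
    let F : Matrix (Fin 2) (Fin 2) ℂ :=
      ((Real.sqrt (1 + ‖z‖ ^ 2))⁻¹ : ℂ) • !![1, z * lam⁻¹; -(conj z) * lam, 1]
    let B : ℂ → Matrix (Fin 2) (Fin 2) ℂ := fun μ =>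
      ((Real.sqrt (1 + ‖z‖ ^ 2))⁻¹ : ℂ) •
        !![1, 0; conj z * μ, 1 + (‖z‖ : ℂ) ^ 2]
    -- `F` is special unitary
    Fᴴ * F = 1 ∧ F.det = 1 ∧
    -- `det B = 1` and the Iwasawa factorization `Φ = F·B`
    (B lam).det = 1 ∧
    !![1, z * lam⁻¹; 0, 1] = F * B lam ∧
    -- for fixed `z` the entries of `B` are polynomials in `λ`
    (∀ i j : Fin 2, ∃ P : Polynomial ℂ, ∀ μ : ℂ, B μ i j = P.eval μ) ∧
    -- at `λ = 0`, `B` is the diagonal matrix `(1+|z|²)^{-1/2}·diag(1, 1+|z|²)`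
    B 0 = ((Real.sqrt (1 + ‖z‖ ^ 2))⁻¹ : ℂ) •
      Matrix.diagonal ![1, 1 + (‖z‖ : ℂ) ^ 2] ∧
    -- whose diagonal entries are positive reals
    (∀ i : Fin 2, ((B 0) i i).im = 0 ∧ 0 < ((B 0) i i).re) := by
  intro F B
  have hnorm : ‖z * lam⁻¹‖ = ‖z‖ := by simp [hlam]
  have hconj : conj (z * lam⁻¹) = conj z * lam := by
    rw [map_mul, map_inv₀, ← Complex.inv_eq_conj hlam, inv_inv]
  have hF : F = iwasawaUnitary (z * lam⁻¹) := by
    simp only [F, iwasawaUnitary, hnorm, hconj, neg_mul]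
  have hB : B lam = iwasawaTriangular (z * lam⁻¹) := by
    simp only [B, iwasawaTriangular, hnorm, hconj]
  obtain ⟨hF_unitary, hF_det⟩ :=
    mem_specialUnitaryGroup_iff.1 (iwasawaUnitary_mem_specialUnitaryGroup (z * lam⁻¹))
  have hB_affine : ∀ i j μ, B μ i j = B 0 i j + (B 1 i j - B 0 i j) * μ := by
    intro i j μ
    fin_cases i <;> fin_cases j <;> simp [B]
    ring
  rw [hF, hB]
  refine ⟨mem_unitaryGroup_iff'.1 hF_unitary, hF_det, det_iwasawaTriangular _,
    (iwasawaUnitary_mul_iwasawaTriangular _).symm,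
    fun i j => ⟨.C (B 0 i j) + .C (B 1 i j - B 0 i j) * .X, fun μ => by simp [hB_affine i j μ]⟩,
    ?_, ?_⟩
  · ext i j
    fin_cases i <;> fin_cases j <;> simp [B]
  · intro i
    fin_cases i <;> simp [B, ← ofReal_pow] <;> positivity
end

section
/- For all z, λ ∈ ℂ with |λ| = 1, set a := λ⁻¹z − z̄λ. Then ā = −a; the matrix F := [[cosh a, sinh a], [sinh a, cosh a]] is special unitary (F*F = I and det F = 1); and with b := z̄λ one has the factorization exp(λ⁻¹z·[[0,1],[1,0]]) = [[cosh(λ⁻¹z), sinh(λ⁻¹z)], [sinh(λ⁻¹z), cosh(λ⁻¹z)]] = F·B, where B := [[cosh b, sinh b], [sinh b, cosh b]]. For fixed z the entries of B are entire functions of λ, and B equals the identity matrix at λ = 0. -/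
/-!
Write `C w = [[cosh w, sinh w], [sinh w, cosh w]] = exp (w • J)` with `J = [[0,1],[1,0]]`.
By the addition formulas `w ↦ C w` is a homomorphism from `(ℂ, +)`, and `(C w)ᴴ = C (conj w)`.
For `|λ| = 1` we have `conj λ = λ⁻¹`, so `a = λ⁻¹z - z̄λ` is purely imaginary; hence
`(C a)ᴴ (C a) = C (-a) C a = C 0 = 1`, and `λ⁻¹z = a + z̄λ` gives `C (λ⁻¹z) = C a · C (z̄λ)`.
-/

open Complex ComplexConjugate Matrix

noncomputable section

def coshSinhMatrix (w : ℂ) : Matrix (Fin 2) (Fin 2) ℂ :=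
  !![cosh w, sinh w; sinh w, cosh w]

theorem coshSinhMatrix_zero : coshSinhMatrix 0 = 1 := by
  simp [coshSinhMatrix, one_fin_two]

theorem coshSinhMatrix_add (u v : ℂ) :
    coshSinhMatrix (u + v) = coshSinhMatrix u * coshSinhMatrix v := by
  rw [coshSinhMatrix, coshSinhMatrix, coshSinhMatrix, mul_fin_two, cosh_add, sinh_add]
  ext i j
  fin_cases i <;> fin_cases j <;> simp <;> ring

theorem conjTranspose_coshSinhMatrix (w : ℂ) :
    (coshSinhMatrix w)ᴴ = coshSinhMatrix (conj w) := by
  ext i j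
  fin_cases i <;> fin_cases j <;> simp [coshSinhMatrix, ← cosh_conj, ← sinh_conj]

theorem det_coshSinhMatrix (w : ℂ) : (coshSinhMatrix w).det = 1 := by
  rw [coshSinhMatrix, det_fin_two_of, ← sq, ← sq, cosh_sq_sub_sinh_sq]

theorem conjTranspose_mul_coshSinhMatrix_of_conj_eq_neg {w : ℂ} (hw : conj w = -w) :
    (coshSinhMatrix w)ᴴ * coshSinhMatrix w = 1 := by
  rw [conjTranspose_coshSinhMatrix, hw, ← coshSinhMatrix_add, neg_add_cancel,
    coshSinhMatrix_zero]

theorem differentiable_coshSinhMatrix_apply (i j : Fin 2) :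
    Differentiable ℂ fun w => coshSinhMatrix w i j := by
  fin_cases i <;> fin_cases j <;> simp [coshSinhMatrix]

/-- `J` is diagonalized by `P = [[1,1],[1,-1]]`, with `P⁻¹ = P / 2`. -/
theorem exp_smul_swap (w : ℂ) :
    NormedSpace.exp (w • !![0, 1; 1, 0] : Matrix (Fin 2) (Fin 2) ℂ) = coshSinhMatrix w := by
  set P : Matrix (Fin 2) (Fin 2) ℂ := !![1, 1; 1, -1]
  have hPinv : P⁻¹ = (2⁻¹ : ℂ) • P := by
    apply inv_eq_right_inv
    ext i j
    fin_cases i <;> fin_cases j <;> simp [P, mul_apply, Fin.sum_univ_two] <;> ring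
  have hP : IsUnit P := by
    rw [isUnit_iff_isUnit_det, det_fin_two_of]
    norm_num
  have hdiag : w • !![0, 1; 1, 0] = P * diagonal ![w, -w] * P⁻¹ := by
    rw [hPinv]
    ext i j
    fin_cases i <;> fin_cases j <;>
      simp [P, mul_apply, Fin.sum_univ_two, vecMul_diagonal] <;> ring
  rw [hdiag, exp_conj P _ hP, exp_diagonal, hPinv]
  ext i j
  fin_cases i <;> fin_cases j <;>
    simp [P, coshSinhMatrix, mul_apply, Fin.sum_univ_two, Pi.exp_def, ← exp_eq_exp_ℂ,
      vecMul_diagonal, Complex.cosh, Complex.sinh] <;> ring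

theorem conj_inv_mul_sub_conj_mul {z μ : ℂ} (hμ : ‖μ‖ = 1) :
    conj (μ⁻¹ * z - conj z * μ) = -(μ⁻¹ * z - conj z * μ) := by
  rw [map_sub, map_mul, map_mul, map_inv₀, ← Complex.inv_eq_conj hμ, inv_inv, conj_conj]
  ring

end

theorem stmt14 (z lam : ℂ) (hlam : ‖lam‖ = 1) :
    let a : ℂ := lam⁻¹ * z - conj z * lam
    let F : Matrix (Fin 2) (Fin 2) ℂ :=
      !![Complex.cosh a, Complex.sinh a; Complex.sinh a, Complex.cosh a]
    let B : ℂ → Matrix (Fin 2) (Fin 2) ℂ := fun μ =>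
      !![Complex.cosh (conj z * μ), Complex.sinh (conj z * μ);
         Complex.sinh (conj z * μ), Complex.cosh (conj z * μ)]
    -- `ā = −a`
    conj a = -a ∧
    -- `F` is special unitary
    Fᴴ * F = 1 ∧ F.det = 1 ∧
    -- `Φ = exp(λ⁻¹z·[[0,1],[1,0]])` and the factorization `Φ = F·B`
    NormedSpace.exp ((lam⁻¹ * z) • (!![0, 1; 1, 0] : Matrix (Fin 2) (Fin 2) ℂ))
      = !![Complex.cosh (lam⁻¹ * z), Complex.sinh (lam⁻¹ * z);
           Complex.sinh (lam⁻¹ * z), Complex.cosh (lam⁻¹ * z)] ∧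
    !![Complex.cosh (lam⁻¹ * z), Complex.sinh (lam⁻¹ * z);
       Complex.sinh (lam⁻¹ * z), Complex.cosh (lam⁻¹ * z)] = F * B lam ∧
    -- for fixed `z`, the entries of `B` are entire functions of `λ`
    (∀ i j : Fin 2, Differentiable ℂ (fun μ => B μ i j)) ∧
    -- `B` equals the identity matrix at `λ = 0`
    B 0 = 1 := by
  intro a F B
  have ha : conj a = -a := conj_inv_mul_sub_conj_mul hlam
  have hsplit : lam⁻¹ * z = a + conj z * lam := by ring
  refine ⟨ha, conjTranspose_mul_coshSinhMatrix_of_conj_eq_neg ha, det_coshSinhMatrix a,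
    exp_smul_swap _, ?_, fun i j => ?_, ?_⟩
  · rw [hsplit]
    exact coshSinhMatrix_add a (conj z * lam)
  · exact (differentiable_coshSinhMatrix_apply i j).comp (differentiable_id.const_mul _)
  · show coshSinhMatrix (conj z * 0) = 1
    rw [mul_zero, coshSinhMatrix_zero]
end
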